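/- With σ as defined implicitly by ∫₀^θ sinᵏ t cosˡ t dt = c₁ ∫₀^{σ(θ)} sin^{k+l} s ds, the inequality σ'(θ) ≥ 1 holds for all θ ∈ (0, π/2); equivalently, sinᵏ θ cosˡ θ ≥ c₁ sin^{k+l} σ(θ) for all θ ∈ (0, π/2). -/

import Mathlib

/-!
Write `g θ = sinᵏ θ cosˡ θ` and `h θ = g θ - c₁ sin^(k+l) (σ θ)`. Differentiating the defining
identity gives `σ' = g / (c₁ sin^(k+l) ∘ σ)`, so both claims amount to `h ≥ 0`; moreover `h`
vanishes at `0` and `π / 2`. Suppose `h` attains a negative minimum, necessarily at an interior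
`θ₀`. There `h' = g w` with `w = k cot θ - l tan θ - (k + l) cot σ`, so `w θ₀ = 0`, and `σ' θ₀ < 1`.
Since `1 / sin² = 1 + cot²`, the weighted Cauchy–Schwarz inequality
`(k x - l y)² ≤ (k + l)(k x² + l y²)` turns `w θ₀ = 0` into
`(k + l) / sin² (σ θ₀) ≤ k / sin² θ₀ + l / cos² θ₀`, whence `w' θ₀ < 0`. So `w > 0`, hence `h' > 0`,
just left of `θ₀`, contradicting minimality.
-/

open Real Set Filter Topology

theorem strictMonoOn_integral_of_pos {f : ℝ → ℝ} {a b : ℝ} (hf : Continuous f)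
    (hpos : ∀ x ∈ Ioo a b, 0 < f x) :
    StrictMonoOn (fun x => ∫ t in a..x, f t) (Icc a b) := by
  refine strictMonoOn_of_deriv_pos (convex_Icc a b) ?_ fun x hx => ?_
  · exact fun x _ => (hf.integral_hasStrictDerivAt a x).hasDerivAt.continuousAt.continuousWithinAt
  · rw [(hf.integral_hasStrictDerivAt a x).hasDerivAt.deriv]
    exact hpos x (by simpa using hx)

theorem StrictMonoOn.continuousOn_of_comp {G σ : ℝ → ℝ} {s : Set ℝ} {a b : ℝ}
    (hG : StrictMonoOn G (Icc a b)) (hσ : MapsTo σ s (Icc a b))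
    (hGσ : ContinuousOn (fun x => G (σ x)) s) : ContinuousOn σ s := by
  intro x hx
  rw [ContinuousWithinAt, tendsto_order]
  constructor
  · intro u hu
    rcases lt_or_ge u a with hua | hau
    · filter_upwards [self_mem_nhdsWithin] with y hy using hua.trans_le (hσ hy).1
    · have hu' : u ∈ Icc a b := ⟨hau, hu.le.trans (hσ hx).2⟩
      filter_upwards [(hGσ x hx).eventually_const_lt (hG hu' (hσ hx) hu), self_mem_nhdsWithin]
        with y hGy hy
      exact lt_of_not_ge fun hyu => (hGy.trans_le (hG.monotoneOn (hσ hy) hu' hyu)).false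
  · intro u hu
    rcases le_or_gt u b with hub | hbu
    · have hu' : u ∈ Icc a b := ⟨(hσ hx).1.trans hu.le, hub⟩
      filter_upwards [(hGσ x hx).eventually_lt_const (hG (hσ hx) hu' hu), self_mem_nhdsWithin]
        with y hGy hy
      exact lt_of_not_ge fun hyu => (hGy.trans_le (hG.monotoneOn hu' (hσ hy) hyu)).false
    · filter_upwards [self_mem_nhdsWithin] with y hy using (hσ hy).2.trans_lt hbu

theorem HasDerivAt.of_hasStrictDerivAt_comp {G σ : ℝ → ℝ} {G' L θ : ℝ}
    (hσ : ContinuousAt σ θ) (hG : HasStrictDerivAt G G' (σ θ)) (hG' : G' ≠ 0)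
    (hGσ : HasDerivAt (fun x => G (σ x)) L θ) : HasDerivAt σ (L / G') θ := by
  have hinv := (hG.to_localInverse hG').hasDerivAt.comp θ hGσ
  rw [div_eq_inv_mul]
  refine hinv.congr_of_eventuallyEq ?_
  filter_upwards [hσ.eventually (hG.eventually_left_inverse hG')] with x hx using hx.symm

theorem not_isLocalMin_of_deriv_pos_left {f : ℝ → ℝ} {x : ℝ}
    (hf : ∀ᶠ y in 𝓝 x, DifferentiableAt ℝ f y) (hpos : ∀ᶠ y in 𝓝[<] x, 0 < deriv f y) :
    ¬ IsLocalMin f x := by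
  intro hmin
  obtain ⟨a, hax, hdiff⟩ := mem_nhdsLE_iff_exists_Ioc_subset.1 (nhdsWithin_le_nhds (hf.and hmin))
  obtain ⟨b, hbx, hderiv⟩ := mem_nhdsLT_iff_exists_Ioo_subset.1 hpos
  obtain ⟨y, hy, hyx⟩ := exists_between (max_lt hax (mem_Iio.1 hbx))
  obtain ⟨hya, hyb⟩ := max_lt_iff.1 hy
  have hIcc : Icc y x ⊆ Ioc a x := Icc_subset_Ioc_iff hyx.le |>.2 ⟨hya, le_rfl⟩
  obtain ⟨ξ, hξ, hslope⟩ := exists_deriv_eq_slope f hyx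
    (fun z hz => (hdiff (hIcc hz)).1.continuousAt.continuousWithinAt)
    (fun z hz => (hdiff (hIcc (Ioo_subset_Icc_self hz))).1.differentiableWithinAt)
  have hξpos : 0 < deriv f ξ := hderiv ⟨hyb.trans hξ.1, hξ.2⟩
  have hmin_y : f x ≤ f y := (hdiff (hIcc (left_mem_Icc.2 hyx.le))).2
  rw [hslope, lt_div_iff₀ (sub_pos.2 hyx)] at hξpos
  linarith

theorem Real.hasDerivAt_cot {x : ℝ} (hx : sin x ≠ 0) : HasDerivAt cot (-1 / sin x ^ 2) x := by
  rw [show (cot : ℝ → ℝ) = cos / sin from funext cot_eq_cos_div_sin]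
  refine ((hasDerivAt_cos x).div (hasDerivAt_sin x) hx).congr_deriv ?_
  linear_combination (-1 / sin x ^ 2) * sin_sq_add_cos_sq x

theorem Real.hasDerivAt_sin_rpow (p : ℝ) {x : ℝ} (hx : sin x ≠ 0) :
    HasDerivAt (fun y => sin y ^ p) (p * cot x * sin x ^ p) x := by
  convert (hasDerivAt_sin x).rpow_const (p := p) (Or.inl hx) using 1
  rw [rpow_sub_one hx, cot_eq_cos_div_sin]
  field_simp

theorem Real.hasDerivAt_cos_rpow (p : ℝ) {x : ℝ} (hx : cos x ≠ 0) :
    HasDerivAt (fun y => cos y ^ p) (-(p * tan x) * cos x ^ p) x := by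
  convert (hasDerivAt_cos x).rpow_const (p := p) (Or.inl hx) using 1
  rw [rpow_sub_one hx, tan_eq_sin_div_cos]
  field_simp

theorem sq_sub_le_add_mul_add (k l x y : ℝ) (hk : 0 ≤ k) (hl : 0 ≤ l) :
    (k * x - l * y) ^ 2 ≤ (k + l) * (k * x ^ 2 + l * y ^ 2) := by
  nlinarith [mul_nonneg (mul_nonneg hk hl) (sq_nonneg (x + y))]

theorem add_div_sin_sq_le {k l θ φ : ℝ} (hk : 0 ≤ k) (hl : 0 ≤ l) (hkl : 0 < k + l)
    (hθs : sin θ ≠ 0) (hθc : cos θ ≠ 0) (hφ : sin φ ≠ 0)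
    (h : k * cot θ - l * tan θ = (k + l) * cot φ) :
    (k + l) / sin φ ^ 2 ≤ k / sin θ ^ 2 + l / cos θ ^ 2 := by
  have inv_sin_sq (x : ℝ) (hx : sin x ≠ 0) : 1 / sin x ^ 2 = 1 + cot x ^ 2 := by
    rw [cot_eq_cos_div_sin]; field_simp; linear_combination -sin_sq_add_cos_sq x
  have inv_cos_sq : 1 / cos θ ^ 2 = 1 + tan θ ^ 2 := by
    rw [tan_eq_sin_div_cos]; field_simp; linear_combination -sin_sq_add_cos_sq θ
  rw [div_eq_mul_one_div, div_eq_mul_one_div k, div_eq_mul_one_div l, inv_sin_sq φ hφ,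
    inv_sin_sq θ hθs, inv_cos_sq]
  have := sq_sub_le_add_mul_add k l (cot θ) (tan θ) hk hl
  rw [h] at this
  nlinarith

section IntegralReparametrization

variable {f g σ : ℝ → ℝ} {a b c : ℝ}

theorem reparam_mem_Ioo (hg : Continuous g) (hgpos : ∀ x ∈ Ioo 0 a, 0 < g x) (hσa : σ a = b)
    (heq : ∀ θ ∈ Icc 0 a, ∫ t in (0:ℝ)..θ, g t = c * ∫ s in (0:ℝ)..σ θ, f s)
    {θ : ℝ} (hθ : θ ∈ Ioo 0 a) (hσθ : σ θ ∈ Icc 0 b) : σ θ ∈ Ioo 0 b := by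
  have hF := strictMonoOn_integral_of_pos hg hgpos
  have h0 : (0 : ℝ) ∈ Icc 0 a := left_mem_Icc.2 (hθ.1.trans hθ.2).le
  have ha : a ∈ Icc 0 a := right_mem_Icc.2 (hθ.1.trans hθ.2).le
  have hθ' := Ioo_subset_Icc_self hθ
  refine ⟨hσθ.1.lt_of_ne fun h => (hF h0 hθ' hθ.1).ne ?_,
    hσθ.2.lt_of_ne fun h => (hF hθ' ha hθ.2).ne ?_⟩
  · simp only [heq θ hθ', ← h, intervalIntegral.integral_same, mul_zero]
  · simp only [heq θ hθ', heq a ha, h, hσa]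

theorem reparam_const_pos (hf : Continuous f) (hfpos : ∀ x ∈ Ioo 0 b, 0 < f x)
    (hg : Continuous g) (hgpos : ∀ x ∈ Ioo 0 a, 0 < g x) (ha : 0 < a) (hb : 0 < b)
    (hσa : σ a = b) (heq : ∀ θ ∈ Icc 0 a, ∫ t in (0:ℝ)..θ, g t = c * ∫ s in (0:ℝ)..σ θ, f s) :
    0 < c := by
  have hF :=
    strictMonoOn_integral_of_pos hg hgpos (left_mem_Icc.2 ha.le) (right_mem_Icc.2 ha.le) ha
  have hG :=
    strictMonoOn_integral_of_pos hf hfpos (left_mem_Icc.2 hb.le) (right_mem_Icc.2 hb.le) hb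
  simp only [intervalIntegral.integral_same] at hF hG
  rw [heq a (right_mem_Icc.2 ha.le), hσa] at hF
  exact pos_of_mul_pos_left hF hG.le

theorem reparam_continuousOn (hf : Continuous f) (hfpos : ∀ x ∈ Ioo 0 b, 0 < f x)
    (hg : Continuous g) (hc : c ≠ 0) (hσ : MapsTo σ (Icc 0 a) (Icc 0 b))
    (heq : ∀ θ ∈ Icc 0 a, ∫ t in (0:ℝ)..θ, g t = c * ∫ s in (0:ℝ)..σ θ, f s) :
    ContinuousOn σ (Icc 0 a) := by
  refine (strictMonoOn_integral_of_pos hf hfpos).continuousOn_of_comp hσ ?_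
  have hF := intervalIntegral.continuous_primitive (μ := MeasureTheory.volume)
    (hg.intervalIntegrable ·) 0
  refine ((continuous_const (y := c⁻¹)).mul hF).continuousOn.congr fun θ hθ => ?_
  simp only [Pi.mul_apply, heq θ hθ, inv_mul_cancel_left₀ hc]

theorem reparam_hasDerivAt (hf : Continuous f) (hg : Continuous g) (hc : c ≠ 0)
    (hσ : ContinuousOn σ (Icc 0 a))
    (heq : ∀ θ ∈ Icc 0 a, ∫ t in (0:ℝ)..θ, g t = c * ∫ s in (0:ℝ)..σ θ, f s)
    {θ : ℝ} (hθ : θ ∈ Ioo 0 a) (hfσ : f (σ θ) ≠ 0) :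
    HasDerivAt σ (g θ / (c * f (σ θ))) θ := by
  refine .of_hasStrictDerivAt_comp (hσ.continuousAt (Icc_mem_nhds hθ.1 hθ.2))
    ((hf.integral_hasStrictDerivAt 0 (σ θ)).const_mul c) (mul_ne_zero hc hfσ) ?_
  refine (hg.integral_hasStrictDerivAt 0 θ).hasDerivAt.congr_of_eventuallyEq ?_
  filter_upwards [Icc_mem_nhds hθ.1 hθ.2] with x hx using (heq x hx).symm

end IntegralReparametrization

theorem sin_pos_and_cos_pos_of_mem_Ioo {θ : ℝ} (hθ : θ ∈ Ioo 0 (π / 2)) :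
    0 < sin θ ∧ 0 < cos θ :=
  ⟨sin_pos_of_pos_of_lt_pi hθ.1 (hθ.2.trans (by linarith [pi_pos])),
    cos_pos_of_mem_Ioo ⟨by linarith [hθ.1, pi_pos], hθ.2⟩⟩

section SinCosReparametrization

variable {k l c : ℝ} {σ : ℝ → ℝ}

theorem hasDerivAt_sin_rpow_mul_cos_rpow_sub {θ : ℝ} (hc : c ≠ 0) (hs : 0 < sin θ)
    (hcos : 0 < cos θ) (hS : 0 < sin (σ θ))
    (hσ : HasDerivAt σ (sin θ ^ k * cos θ ^ l / (c * sin (σ θ) ^ (k + l))) θ) :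
    HasDerivAt (fun x => sin x ^ k * cos x ^ l - c * sin (σ x) ^ (k + l))
      (sin θ ^ k * cos θ ^ l * (k * cot θ - l * tan θ - (k + l) * cot (σ θ))) θ := by
  have hSp : sin (σ θ) ^ (k + l) ≠ 0 := (rpow_pos_of_pos hS _).ne'
  refine (((hasDerivAt_sin_rpow k hs.ne').mul (hasDerivAt_cos_rpow l hcos.ne')).sub
    (((hasDerivAt_sin_rpow (k + l) hS.ne').comp θ hσ).const_mul c)).congr_deriv ?_
  field_simp
  ring

theorem hasDerivAt_cot_sub_tan_sub_cot_comp {θ σ' : ℝ} (hs : sin θ ≠ 0) (hcos : cos θ ≠ 0)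
    (hS : sin (σ θ) ≠ 0) (hσ : HasDerivAt σ σ' θ) :
    HasDerivAt (fun x => k * cot x - l * tan x - (k + l) * cot (σ x))
      (-(k / sin θ ^ 2) - l / cos θ ^ 2 + (k + l) / sin (σ θ) ^ 2 * σ') θ := by
  refine ((((hasDerivAt_cot hs).const_mul k).sub ((hasDerivAt_tan hcos).const_mul l)).sub
    (((hasDerivAt_cot hS).comp θ hσ).const_mul (k + l))).congr_deriv ?_
  ring

theorem not_isLocalMin_sin_rpow_mul_cos_rpow_sub (hk : 0 < k) (hl : 0 < l) (hc : 0 < c)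
    (hmem : ∀ θ ∈ Ioo 0 (π / 2), σ θ ∈ Ioo 0 π)
    (hσ : ∀ θ ∈ Ioo 0 (π / 2),
      HasDerivAt σ (sin θ ^ k * cos θ ^ l / (c * sin (σ θ) ^ (k + l))) θ)
    {θ₀ : ℝ} (hθ₀ : θ₀ ∈ Ioo 0 (π / 2))
    (hlt : sin θ₀ ^ k * cos θ₀ ^ l < c * sin (σ θ₀) ^ (k + l)) :
    ¬ IsLocalMin (fun x => sin x ^ k * cos x ^ l - c * sin (σ x) ^ (k + l)) θ₀ := by
  have hpos (θ : ℝ) (hθ : θ ∈ Ioo 0 (π / 2)) : 0 < sin θ ∧ 0 < cos θ ∧ 0 < sin (σ θ) :=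
    ⟨(sin_pos_and_cos_pos_of_mem_Ioo hθ).1, (sin_pos_and_cos_pos_of_mem_Ioo hθ).2,
      sin_pos_of_pos_of_lt_pi (hmem θ hθ).1 (hmem θ hθ).2⟩
  set w := fun x => k * cot x - l * tan x - (k + l) * cot (σ x)
  have hderiv (θ : ℝ) (hθ : θ ∈ Ioo 0 (π / 2)) :
      HasDerivAt (fun x => sin x ^ k * cos x ^ l - c * sin (σ x) ^ (k + l))
        (sin θ ^ k * cos θ ^ l * w θ) θ :=
    hasDerivAt_sin_rpow_mul_cos_rpow_sub hc.ne' (hpos θ hθ).1 (hpos θ hθ).2.1 (hpos θ hθ).2.2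
      (hσ θ hθ)
  intro hmin
  obtain ⟨hs, hcos, hS⟩ := hpos θ₀ hθ₀
  have hw0 : w θ₀ = 0 :=
    (mul_eq_zero.1 (hmin.hasDerivAt_eq_zero (hderiv θ₀ hθ₀))).resolve_left (by positivity)
  have hw' : deriv w θ₀ < 0 := by
    rw [(hasDerivAt_cot_sub_tan_sub_cot_comp hs.ne' hcos.ne' hS.ne' (hσ θ₀ hθ₀)).deriv]
    have hσ' := (div_lt_one (by positivity)).2 hlt
    have hbound := add_div_sin_sq_le hk.le hl.le (by linarith) hs.ne' hcos.ne' hS.ne'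
      (by linear_combination hw0)
    have : 0 < (k + l) / sin (σ θ₀) ^ 2 := by positivity
    nlinarith
  have hsign := eventually_nhdsWithin_sign_eq_of_deriv_neg hw' hw0
  refine not_isLocalMin_of_deriv_pos_left ?_ ?_ hmin
  · filter_upwards [Ioo_mem_nhds hθ₀.1 hθ₀.2] with x hx using (hderiv x hx).differentiableAt
  · filter_upwards [nhdsWithin_le_nhds hsign, nhdsWithin_le_nhds (Ioo_mem_nhds hθ₀.1 hθ₀.2),
      self_mem_nhdsWithin] with x hxsign hx hxlt
    have hwx : 0 < w x := by
      rwa [sign_pos (sub_pos.2 (mem_Iio.1 hxlt) : 0 < θ₀ - x), sign_eq_one_iff] at hxsign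
    obtain ⟨hsx, hcosx, -⟩ := hpos x hx
    rw [(hderiv x hx).deriv]
    positivity

theorem mul_sin_rpow_comp_le_sin_rpow_mul_cos_rpow (hk : 0 < k) (hl : 0 < l) (hc : 0 < c)
    (hσ0 : σ 0 = 0) (hσπ : σ (π / 2) = π) (hcont : ContinuousOn σ (Icc 0 (π / 2)))
    (hmem : ∀ θ ∈ Ioo 0 (π / 2), σ θ ∈ Ioo 0 π)
    (hσ : ∀ θ ∈ Ioo 0 (π / 2),
      HasDerivAt σ (sin θ ^ k * cos θ ^ l / (c * sin (σ θ) ^ (k + l))) θ) :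
    ∀ θ ∈ Icc 0 (π / 2), c * sin (σ θ) ^ (k + l) ≤ sin θ ^ k * cos θ ^ l := by
  set h := fun x => sin x ^ k * cos x ^ l - c * sin (σ x) ^ (k + l)
  have hkl : k + l ≠ 0 := by positivity
  have hcont_h : ContinuousOn h (Icc 0 (π / 2)) :=
    ((continuous_sin.rpow_const fun _ => Or.inr hk.le).mul
      (continuous_cos.rpow_const fun _ => Or.inr hl.le)).continuousOn.sub
    (continuousOn_const.mul
      ((continuous_sin.rpow_const fun _ => Or.inr (by positivity)).comp_continuousOn hcont))
  have h0 : h 0 = 0 := by simp [h, hσ0, zero_rpow hk.ne', zero_rpow hkl]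
  have hπ : h (π / 2) = 0 := by simp [h, hσπ, zero_rpow hl.ne', zero_rpow hkl]
  obtain ⟨θ₀, hθ₀, hmin⟩ :=
    isCompact_Icc.exists_isMinOn (nonempty_Icc.2 (by positivity)) hcont_h
  intro θ hθ
  by_contra hlt
  have hneg : h θ₀ < 0 := (hmin hθ).trans_lt (sub_neg.2 (not_le.1 hlt))
  have hθ₀' : θ₀ ∈ Ioo 0 (π / 2) :=
    ⟨hθ₀.1.lt_of_ne (by rintro rfl; linarith), hθ₀.2.lt_of_ne (by rintro rfl; linarith)⟩
  exact not_isLocalMin_sin_rpow_mul_cos_rpow_sub hk hl hc hmem hσ hθ₀' (sub_neg.1 hneg)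
    (hmin.isLocalMin (Icc_mem_nhds hθ₀'.1 hθ₀'.2))

end SinCosReparametrization

theorem stmt_5_general (k l : ℝ) (hk : 0 < k) (hl : 0 < l)
    (c₁ : ℝ)
    (σ : ℝ → ℝ)
    (hσmem : ∀ θ ∈ Icc 0 (π / 2), σ θ ∈ Icc 0 π)
    (hσ0 : σ 0 = 0) (hσπ : σ (π / 2) = π)
    (hσeq : ∀ θ ∈ Icc 0 (π / 2),
      (∫ t in (0:ℝ)..θ, Real.sin t ^ k * Real.cos t ^ l) =
        c₁ * ∫ s in (0:ℝ)..(σ θ), Real.sin s ^ (k + l)) :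
    ∀ θ ∈ Ioo 0 (π / 2), 1 ≤ deriv σ θ ∧
      c₁ * Real.sin (σ θ) ^ (k + l) ≤ Real.sin θ ^ k * Real.cos θ ^ l := by
  have hπ : 0 < π := pi_pos
  have hg : Continuous fun t => sin t ^ k * cos t ^ l :=
    (continuous_sin.rpow_const fun _ => Or.inr hk.le).mul
      (continuous_cos.rpow_const fun _ => Or.inr hl.le)
  have hf : Continuous fun s => sin s ^ (k + l) :=
    continuous_sin.rpow_const fun _ => Or.inr (by positivity)
  have hgpos (t : ℝ) (ht : t ∈ Ioo 0 (π / 2)) : 0 < sin t ^ k * cos t ^ l := by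
    obtain ⟨hs, hc⟩ := sin_pos_and_cos_pos_of_mem_Ioo ht
    positivity
  have hfpos (s : ℝ) (hs : s ∈ Ioo 0 π) : 0 < sin s ^ (k + l) :=
    rpow_pos_of_pos (sin_pos_of_pos_of_lt_pi hs.1 hs.2) _
  have hc : 0 < c₁ := reparam_const_pos hf hfpos hg hgpos (by positivity) hπ hσπ hσeq
  have hmem θ (hθ : θ ∈ Ioo 0 (π / 2)) : σ θ ∈ Ioo 0 π :=
    reparam_mem_Ioo hg hgpos hσπ hσeq hθ (hσmem θ (Ioo_subset_Icc_self hθ))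
  have hcont := reparam_continuousOn hf hfpos hg hc.ne' hσmem hσeq
  have hσ θ (hθ : θ ∈ Ioo 0 (π / 2)) :=
    reparam_hasDerivAt hf hg hc.ne' hcont hσeq hθ (hfpos _ (hmem θ hθ)).ne'
  have hle := mul_sin_rpow_comp_le_sin_rpow_mul_cos_rpow hk hl hc hσ0 hσπ hcont hmem hσ
  intro θ hθ
  refine ⟨?_, hle θ (Ioo_subset_Icc_self hθ)⟩
  rw [(hσ θ hθ).deriv, one_le_div (mul_pos hc (hfpos _ (hmem θ hθ)))]
  exact hle θ (Ioo_subset_Icc_self hθ)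

theorem stmt_5 (k l : ℝ) (hk : 0 < k) (hl : 0 < l)
    (c₁ : ℝ)
    (hc₁ : c₁ = (∫ t in (0:ℝ)..(π / 2), Real.sin t ^ k * Real.cos t ^ l) /
        (∫ s in (0:ℝ)..π, Real.sin s ^ (k + l)))
    (σ : ℝ → ℝ)
    (hσmem : ∀ θ ∈ Icc 0 (π / 2), σ θ ∈ Icc 0 π)
    (hσ0 : σ 0 = 0) (hσπ : σ (π / 2) = π)
    (hσeq : ∀ θ ∈ Icc 0 (π / 2),
      (∫ t in (0:ℝ)..θ, Real.sin t ^ k * Real.cos t ^ l) =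
        c₁ * ∫ s in (0:ℝ)..(σ θ), Real.sin s ^ (k + l)) :
    ∀ θ ∈ Ioo 0 (π / 2), 1 ≤ deriv σ θ ∧
      c₁ * Real.sin (σ θ) ^ (k + l) ≤ Real.sin θ ^ k * Real.cos θ ^ l :=
  stmt_5_general k l hk hl c₁ σ hσmem hσ0 hσπ hσeq
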